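/- Let $e, L_G : B \to \mathbb{R}$ and suppose a function $e_G(b) = V^*(b) - L_G(b)$ satisfies, on a finite rooted tree of depth $n$ with root $b_0$: $e_G(b) \le e(b)$ at leaves, and $e_G(b) \le \gamma \sum_o P(o|b, a^*_b) e_G(\tau(b, a^*_b, o))$ at internal nodes, where $\gamma \in [0,1)$ and $P(\cdot|b,a)$ are probability distributions over finitely many observations. Then $e_G(b_0) \le \sum_{\ell \in \text{Leaves}} \gamma^{d(\ell)} P(h_{b_0}^{\ell}) e(\ell)$, where $d(\ell)$ is the depth of leaf $\ell$ and $P(h_{b_0}^\ell)$ is the product of observation probabilities along the unique root-to-leaf path. -/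
import Mathlib


/-- A finite rooted tree whose nodes are labeled by beliefs in `B`, with internal
nodes having one child per observation in `O`. -/
inductive BTree (B O : Type) where
  | leaf (b : B)
  | node (b : B) (child : O → BTree B O)

namespace BTree

variable {B O : Type} [Fintype O]

/-- The belief labeling the root. -/
def root : BTree B O → B
  | leaf b => b
  | node b _ => b

/-- `P b o` is the probability `P(o | b, a*_b)` of observation `o` at internal node `b`
under its optimal action.  `leafSum e P γ t` equals
`∑_{ℓ ∈ Leaves(t)} γ^{d(ℓ)} P(h_{root}^ℓ) e(ℓ)`, computed recursively. -/
def leafSum (e : B → ℝ) (P : B → O → ℝ) (γ : ℝ) : BTree B O → ℝ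
  | leaf b => e b
  | node b child => γ * ∑ o, P b o * leafSum e P γ (child o)

/-- The hypotheses of the theorem, stated on every subtree: `e_G ≤ e` at leaves, and
`e_G(b) ≤ γ ∑_o P(o|b,a*_b) e_G(τ(b,a*_b,o))` at internal nodes. -/
def Valid (eG e : B → ℝ) (P : B → O → ℝ) (γ : ℝ) : BTree B O → Prop
  | leaf b => eG b ≤ e b
  | node b child =>
      eG b ≤ γ * ∑ o, P b o * eG (root (child o)) ∧ ∀ o, Valid eG e P γ (child o)

end BTree

/-- AEMS Theorem 1 (tree version): unrolling the recursive inequality down a finite tree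
bounds the root error by the discounted path-probability-weighted sum of leaf errors. -/
theorem stmt_16 {B O : Type} [Fintype O]
    (γ : ℝ) (hγ0 : 0 ≤ γ) (hγ1 : γ < 1)
    (P : B → O → ℝ) (hP0 : ∀ b o, 0 ≤ P b o) (hP1 : ∀ b, ∑ o, P b o = 1)
    (eG e : B → ℝ)
    (t : BTree B O) (hvalid : BTree.Valid eG e P γ t) :
    eG (BTree.root t) ≤ BTree.leafSum e P γ t := by
  induction t with
  | leaf b => exact hvalid
  | node b child ih =>
    obtain ⟨h1, h2⟩ := hvalid
    refine h1.trans ?_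
    apply mul_le_mul_of_nonneg_left _ hγ0
    apply Finset.sum_le_sum
    intro o _
    exact mul_le_mul_of_nonneg_left (ih o (h2 o)) (hP0 b o)
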